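/- Let a ≥ 0, a ≠ 1. There exist real numbers M₁, M₂ satisfying -((a²+3)/2)M₁ - aM₁² + 2aM₂ + M₁M₂ = 0 and M₁² + aM₁ - 3M₂ + (9-a²)/8 = 0. Moreover, for any such pair, the point (M₁, M₂, 0, 1) is an equilibrium of the system Ṁ₁ = aM₁M₃ - M₂M₃, Ṁ₂ = aM₂M₃ - M₁M₃, Ṁ₃ = -((a²+3)/2)M₁M₄ - aM₁² + 2aM₂M₄ + M₁M₂, Ṁ₄ = 0, and it satisfies M₁² + aM₁M₄ - 3M₂M₄ + M₃² + ((9-a²)/8)M₄² = 0. -/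
import Mathlib


open Real

/-- Every depressed real cubic has a root. -/
lemma cubic_has_root (p q : ℝ) : ∃ x : ℝ, x ^ 3 + p * x + q = 0 := by
  have hcont : Continuous (fun x : ℝ => x ^ 3 + p * x + q) := by continuity
  have hA : 0 ≤ |p| := abs_nonneg p
  have hB : 0 ≤ |q| := abs_nonneg q
  have hR0 : (0:ℝ) ≤ 1 + |p| + |q| := by linarith
  have hp1 : -(|p| * (1 + |p| + |q|)) ≤ p * (1 + |p| + |q|) :=
    le_trans (by nlinarith [neg_abs_le p]) (le_refl _)
  have hp2 : p * (-(1 + |p| + |q|)) ≤ |p| * (1 + |p| + |q|) := by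
    nlinarith [neg_abs_le p, le_abs_self p]
  have hq1 : -|q| ≤ q := neg_abs_le q
  have hq2 : q ≤ |q| := le_abs_self q
  have key : |p| * (1 + |p| + |q|) + |q| ≤ (1 + |p| + |q|) ^ 3 := by
    nlinarith [sq_nonneg (|p| + |q|), mul_nonneg hA hB]
  have hfR : 0 ≤ (1 + |p| + |q|) ^ 3 + p * (1 + |p| + |q|) + q := by linarith
  have hfmR : (-(1 + |p| + |q|)) ^ 3 + p * (-(1 + |p| + |q|)) + q ≤ 0 := by
    have : (-(1 + |p| + |q|)) ^ 3 = -((1 + |p| + |q|) ^ 3) := by ring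
    rw [this]; linarith
  have hle : -(1 + |p| + |q|) ≤ 1 + |p| + |q| := by linarith
  obtain ⟨x, _, hx⟩ := intermediate_value_Icc hle hcont.continuousOn ⟨hfmR, hfR⟩
  exact ⟨x, hx⟩

/-- Case (C), the group `G₃.₄ᵃ`: existence of stationary points of the
Lie–Poisson equation on the zero level of the Hamiltonian. -/
theorem stmt_4 (a : ℝ) (ha : 0 ≤ a) (ha' : a ≠ 1) :
    (∃ M₁ M₂ : ℝ,
      -((a ^ 2 + 3) / 2) * M₁ - a * M₁ ^ 2 + 2 * a * M₂ + M₁ * M₂ = 0 ∧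
      M₁ ^ 2 + a * M₁ - 3 * M₂ + (9 - a ^ 2) / 8 = 0) ∧
    ∀ M₁ M₂ : ℝ,
      -((a ^ 2 + 3) / 2) * M₁ - a * M₁ ^ 2 + 2 * a * M₂ + M₁ * M₂ = 0 →
      M₁ ^ 2 + a * M₁ - 3 * M₂ + (9 - a ^ 2) / 8 = 0 →
      ((fun M : ℝ × ℝ × ℝ × ℝ =>
          (a * M.1 * M.2.2.1 - M.2.1 * M.2.2.1,
            a * M.2.1 * M.2.2.1 - M.1 * M.2.2.1,
            -((a ^ 2 + 3) / 2) * M.1 * M.2.2.2 - a * M.1 ^ 2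
              + 2 * a * M.2.1 * M.2.2.2 + M.1 * M.2.1,
            (0 : ℝ))) (M₁, M₂, 0, 1) = (0, 0, 0, 0)) ∧
      M₁ ^ 2 + a * M₁ * 1 - 3 * M₂ * 1 + (0 : ℝ) ^ 2 + (9 - a ^ 2) / 8 * 1 ^ 2 = 0 := by
  constructor
  · obtain ⟨r, hr⟩ := cubic_has_root (3 * (a ^ 2 - 9) / 8) (a * (9 - a ^ 2) / 4)
    refine ⟨r, (r ^ 2 + a * r + (9 - a ^ 2) / 8) / 3, ?_, by ring⟩
    linear_combination (1 / 3) * hr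
  · intro M₁ M₂ h1 h2
    refine ⟨?_, by linarith⟩
    simp only [Prod.mk.injEq]
    refine ⟨by ring, by ring, ?_, trivial⟩
    linear_combination h1
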